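/- T-invariance reduction of the AIPW functional: Let X : Ω → ℝ^d be measurable, T : Ω → ℝ measurable with values in {0,1}, Y : Ω → ℝ measurable, and set 𝒢 = σ(X). Let π : ℝ^d → ℝ be measurable such that π(X) is a version of E[T | 𝒢] and 0 < π(X) < 1 almost surely. Let μ₁, μ₀ : ℝ^d → ℝ be any measurable functions such that μ₁(X), μ₀(X), (Y − μ₁(X))·T/π(X), (Y − μ₀(X))·(1−T)/(1−π(X)), T·μ₁(X)/π(X), and (1−T)·μ₀(X)/(1−π(X)) are integrable. Then θ(π, μ₁, μ₀) = E[ T·Y/π(X) ] − E[ (1−T)·Y/(1−π(X)) ]. -/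

import Mathlib

/-!
Since `π(X)` is `σ(X)`-measurable and is a version of `E[T | X]`, pulling the `σ(X)`-measurable
factor `μ₁(X) / π(X)` out of the conditional expectation gives `E[T μ₁(X) / π(X)] = E[μ₁(X)]`, so
the augmentation term of the treated arm has mean zero; the control arm is the same statement for
`1 - T`, whose conditional expectation is `1 - π(X)`.
-/

open MeasureTheory

section

variable {Ω : Type*} {mΩ : MeasurableSpace Ω} {μ : Measure Ω} [IsFiniteMeasure μ]
  {m : MeasurableSpace Ω}

theorem integral_mul_eq_integral_mul_condExp (hm : m ≤ mΩ) {f g : Ω → ℝ}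
    (hf : StronglyMeasurable[m] f) (hg : Integrable g μ) (hfg : Integrable (f * g) μ) :
    ∫ ω, f ω * g ω ∂μ = ∫ ω, f ω * μ[g | m] ω ∂μ :=
  (integral_condExp hm).symm.trans
    (integral_congr_ae (condExp_mul_of_stronglyMeasurable_left hf hfg hg))

theorem integral_mul_div_eq_of_ae_eq_condExp (hm : m ≤ mΩ) {g p h : Ω → ℝ}
    (hp : p =ᵐ[μ] μ[g | m]) (hp0 : ∀ᵐ ω ∂μ, p ω ≠ 0)
    (hpm : StronglyMeasurable[m] p) (hhm : StronglyMeasurable[m] h) (hg : Integrable g μ)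
    (hint : Integrable (fun ω => g ω * h ω / p ω) μ) :
    ∫ ω, g ω * h ω / p ω ∂μ = ∫ ω, h ω ∂μ := by
  have hfg : Integrable ((h / p) * g) μ :=
    hint.congr (.of_forall fun ω => by simp only [Pi.mul_apply, Pi.div_apply]; ring)
  calc ∫ ω, g ω * h ω / p ω ∂μ = ∫ ω, (h / p) ω * g ω ∂μ :=
        integral_congr_ae (.of_forall fun ω => by simp only [Pi.div_apply]; ring)
    _ = ∫ ω, (h / p) ω * μ[g | m] ω ∂μ :=
        integral_mul_eq_integral_mul_condExp hm (hhm.div hpm) hg hfg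
    _ = ∫ ω, h ω ∂μ := integral_congr_ae <| by
        filter_upwards [hp, hp0] with ω hpω hp0ω
        rw [← hpω, Pi.div_apply, div_mul_cancel₀ _ hp0ω]

theorem integral_add_sub_mul_div_eq_of_ae_eq_condExp (hm : m ≤ mΩ) {g p h y : Ω → ℝ}
    (hp : p =ᵐ[μ] μ[g | m]) (hp0 : ∀ᵐ ω ∂μ, p ω ≠ 0)
    (hpm : StronglyMeasurable[m] p) (hhm : StronglyMeasurable[m] h) (hg : Integrable g μ)
    (hh : Integrable h μ) (hres : Integrable (fun ω => (y ω - h ω) * g ω / p ω) μ)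
    (hw : Integrable (fun ω => g ω * h ω / p ω) μ) :
    ∫ ω, (h ω + (y ω - h ω) * g ω / p ω) ∂μ = ∫ ω, g ω * y ω / p ω ∂μ := by
  have hipw : Integrable (fun ω => g ω * y ω / p ω) μ :=
    (hres.add hw).congr (.of_forall fun ω => by simp only [Pi.add_apply]; ring)
  have hres_eq : ∫ ω, (y ω - h ω) * g ω / p ω ∂μ
      = ∫ ω, g ω * y ω / p ω ∂μ - ∫ ω, g ω * h ω / p ω ∂μ := by
    rw [← integral_sub hipw hw]
    exact integral_congr_ae (.of_forall fun ω => by ring)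
  rw [integral_add hh hres, hres_eq,
    integral_mul_div_eq_of_ae_eq_condExp hm hp hp0 hpm hhm hg hw]
  ring

theorem one_sub_ae_eq_condExp_one_sub (hm : m ≤ mΩ) {g p : Ω → ℝ} (hg : Integrable g μ)
    (hp : p =ᵐ[μ] μ[g | m]) :
    (fun ω => 1 - p ω) =ᵐ[μ] μ[fun ω => 1 - g ω | m] := by
  filter_upwards [condExp_sub (integrable_const (1 : ℝ)) hg m, hp] with ω hω hpω
  change 1 - p ω = μ[(fun _ => 1) - g | m] ω
  rw [hω, Pi.sub_apply, condExp_const hm, hpω]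

end

theorem aipw_T_invariance_reduction_general
    {Ω : Type*} [MeasurableSpace Ω] (P : Measure Ω) [IsProbabilityMeasure P]
    {d : ℕ} (X : Ω → (Fin d → ℝ)) (T Y : Ω → ℝ)
    (hX : Measurable X) (hT : Measurable T)
    (hT01 : ∀ ω, T ω = 0 ∨ T ω = 1)
    (π μ₁ μ₀ : (Fin d → ℝ) → ℝ)
    (hπ : Measurable π) (hμ₁ : Measurable μ₁) (hμ₀ : Measurable μ₀)
    (hπ_ver : (fun ω => π (X ω)) =ᵐ[P] P[T | MeasurableSpace.comap X inferInstance])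
    (hπ_pos : ∀ᵐ ω ∂P, 0 < π (X ω)) (hπ_lt : ∀ᵐ ω ∂P, π (X ω) < 1)
    (h_int_μ₁ : Integrable (fun ω => μ₁ (X ω)) P)
    (h_int_μ₀ : Integrable (fun ω => μ₀ (X ω)) P)
    (h_int_resid₁ : Integrable (fun ω => (Y ω - μ₁ (X ω)) * T ω / π (X ω)) P)
    (h_int_resid₀ : Integrable (fun ω => (Y ω - μ₀ (X ω)) * (1 - T ω) / (1 - π (X ω))) P)
    (h_int_w₁ : Integrable (fun ω => T ω * μ₁ (X ω) / π (X ω)) P)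
    (h_int_w₀ : Integrable (fun ω => (1 - T ω) * μ₀ (X ω) / (1 - π (X ω))) P) :
    ∫ ω, (μ₁ (X ω) - μ₀ (X ω) + (Y ω - μ₁ (X ω)) * T ω / π (X ω)
        - (Y ω - μ₀ (X ω)) * (1 - T ω) / (1 - π (X ω))) ∂P =
      (∫ ω, T ω * Y ω / π (X ω) ∂P) - ∫ ω, (1 - T ω) * Y ω / (1 - π (X ω)) ∂P := by
  have hm : MeasurableSpace.comap X inferInstance ≤ ‹MeasurableSpace Ω› := hX.comap_le
  have hXm : Measurable[MeasurableSpace.comap X inferInstance] X := comap_measurable X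
  have hT_int : Integrable T P := Integrable.of_bound hT.aestronglyMeasurable 1 <|
    .of_forall fun ω => by rcases hT01 ω with h | h <;> simp [h]
  have arm₁ := integral_add_sub_mul_div_eq_of_ae_eq_condExp (h := fun ω => μ₁ (X ω)) hm hπ_ver
    (hπ_pos.mono fun _ h => h.ne') (hπ.comp hXm).stronglyMeasurable
    (hμ₁.comp hXm).stronglyMeasurable hT_int h_int_μ₁ h_int_resid₁ h_int_w₁
  have arm₀ := integral_add_sub_mul_div_eq_of_ae_eq_condExp (h := fun ω => μ₀ (X ω)) hm
    (one_sub_ae_eq_condExp_one_sub hm hT_int hπ_ver) (hπ_lt.mono fun _ h => (sub_pos.2 h).ne')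
    (measurable_const.sub (hπ.comp hXm)).stronglyMeasurable (hμ₀.comp hXm).stronglyMeasurable
    ((integrable_const 1).sub hT_int) h_int_μ₀ h_int_resid₀ h_int_w₀
  have h_int₁ : Integrable (fun ω => μ₁ (X ω) + (Y ω - μ₁ (X ω)) * T ω / π (X ω)) P :=
    h_int_μ₁.add h_int_resid₁
  have h_int₀ : Integrable
      (fun ω => μ₀ (X ω) + (Y ω - μ₀ (X ω)) * (1 - T ω) / (1 - π (X ω))) P :=
    h_int_μ₀.add h_int_resid₀
  rw [← arm₁, ← arm₀, ← integral_sub h_int₁ h_int₀]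
  exact integral_congr_ae (.of_forall fun ω => by ring)

/-- **T-invariance reduction of the AIPW functional.**
If the propensity function `π(X)` is a correct version of `E[T | σ(X)]`, then the AIPW
functional reduces to the inverse-propensity-weighted functional, regardless of the
outcome nuisances `μ₁, μ₀`. -/
theorem aipw_T_invariance_reduction
    {Ω : Type*} [MeasurableSpace Ω] (P : Measure Ω) [IsProbabilityMeasure P]
    {d : ℕ} (X : Ω → (Fin d → ℝ)) (T Y : Ω → ℝ)
    (hX : Measurable X) (hT : Measurable T) (hY : Measurable Y)
    (hT01 : ∀ ω, T ω = 0 ∨ T ω = 1)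
    (π μ₁ μ₀ : (Fin d → ℝ) → ℝ)
    (hπ : Measurable π) (hμ₁ : Measurable μ₁) (hμ₀ : Measurable μ₀)
    (hπ_ver : (fun ω => π (X ω)) =ᵐ[P] P[T | MeasurableSpace.comap X inferInstance])
    (hπ_pos : ∀ᵐ ω ∂P, 0 < π (X ω)) (hπ_lt : ∀ᵐ ω ∂P, π (X ω) < 1)
    (h_int_μ₁ : Integrable (fun ω => μ₁ (X ω)) P)
    (h_int_μ₀ : Integrable (fun ω => μ₀ (X ω)) P)
    (h_int_resid₁ : Integrable (fun ω => (Y ω - μ₁ (X ω)) * T ω / π (X ω)) P)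
    (h_int_resid₀ : Integrable (fun ω => (Y ω - μ₀ (X ω)) * (1 - T ω) / (1 - π (X ω))) P)
    (h_int_w₁ : Integrable (fun ω => T ω * μ₁ (X ω) / π (X ω)) P)
    (h_int_w₀ : Integrable (fun ω => (1 - T ω) * μ₀ (X ω) / (1 - π (X ω))) P) :
    ∫ ω, (μ₁ (X ω) - μ₀ (X ω) + (Y ω - μ₁ (X ω)) * T ω / π (X ω)
        - (Y ω - μ₀ (X ω)) * (1 - T ω) / (1 - π (X ω))) ∂P =
      (∫ ω, T ω * Y ω / π (X ω) ∂P) - ∫ ω, (1 - T ω) * Y ω / (1 - π (X ω)) ∂P :=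
  aipw_T_invariance_reduction_general P X T Y hX hT hT01 π μ₁ μ₀ hπ hμ₁ hμ₀ hπ_ver hπ_pos hπ_lt
    h_int_μ₁ h_int_μ₀ h_int_resid₁ h_int_resid₀ h_int_w₁ h_int_w₀
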